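/- Let P ⊆ ℂ be a parallelogram-free pattern with |P| ≥ 3. Then there is a constant c = c(P) > 0 such that for all n ≥ |P|, S_P^∦(n) ≥ c·n·log n; that is, for every n ≥ |P| there exists a parallelogram-free set A ⊆ ℂ with |A| = n and S_P(A) ≥ c·n·log n. -/

import Mathlib

open MeasureTheory

noncomputable section

/-- `Q` is a similar copy of `P`: the image of `P` under an
orientation-preserving similarity `p ↦ z·p + w`, `z ≠ 0`. -/
def SimilarFin (P Q : Finset ℂ) : Prop :=
  ∃ z w : ℂ, z ≠ 0 ∧ (Q : Set ℂ) = (fun p => z * p + w) '' (P : Set ℂ)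

/-- `SP P Q` is the number of subsets of `Q` that are similar copies of `P`. -/
def SP (P Q : Finset ℂ) : ℕ :=
  letI := Classical.decPred (SimilarFin P)
  (Q.powerset.filter (SimilarFin P)).card

/-- `Q` has no `m` points on a line: every collinear subset has at most `m - 1` points. -/
def NoMOnLine (m : ℕ) (Q : Finset ℂ) : Prop :=
  ∀ S ⊆ Q, Collinear ℝ (S : Set ℂ) → S.card ≤ m - 1

/-- `Q` has `m` points on a line. -/
def HasMOnLine (m : ℕ) (Q : Finset ℂ) : Prop :=
  ∃ S ⊆ Q, S.card = m ∧ Collinear ℝ (S : Set ℂ)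

/-- The number of orientation-preserving isometries of `ℂ` mapping `P` onto itself,
i.e. maps `p ↦ u·p + w` with `|u| = 1` fixing `P` setwise. -/
def IsoPlusCard (P : Finset ℂ) : ℕ :=
  {uw : ℂ × ℂ | ‖uw.1‖ = 1 ∧
    (fun p => uw.1 * p + uw.2) '' (P : Set ℂ) = (P : Set ℂ)}.ncard

/-- The index of `A` with respect to the pattern `P`. -/
def indexP (P A : Finset ℂ) : ℝ :=
  Real.log ((IsoPlusCard P : ℝ) * SP P A + A.card) / Real.log A.card

/-- `SPnm P n m` : the maximum of `SP P Q` over `n`-point sets `Q`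
with no `m` points on a line. -/
def SPnm (P : Finset ℂ) (n m : ℕ) : ℕ :=
  sSup {k | ∃ Q : Finset ℂ, Q.card = n ∧ NoMOnLine m Q ∧ SP P Q = k}

/-- `SPn P n` : the maximum of `SP P Q` over all `n`-point sets `Q`. -/
def SPn (P : Finset ℂ) (n : ℕ) : ℕ :=
  sSup {k | ∃ Q : Finset ℂ, Q.card = n ∧ SP P Q = k}

/-- The Minkowski sum `B + C` of two finite sets of complex numbers. -/
def minkSum (B C : Finset ℂ) : Finset ℂ :=
  letI := Classical.decEq ℂ
  Finset.image₂ (· + ·) B C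

/-- `Q` contains four pairwise distinct points forming a parallelogram. -/
def HasParallelogram (Q : Finset ℂ) : Prop :=
  ∃ p₁ ∈ Q, ∃ p₂ ∈ Q, ∃ p₃ ∈ Q, ∃ p₄ ∈ Q,
    p₁ ≠ p₂ ∧ p₁ ≠ p₃ ∧ p₁ ≠ p₄ ∧ p₂ ≠ p₃ ∧ p₂ ≠ p₄ ∧ p₃ ≠ p₄ ∧
    p₂ - p₁ = p₄ - p₃

/-- `Q` is parallelogram-free: no 3 collinear points and no parallelogram. -/
def ParallelogramFree (Q : Finset ℂ) : Prop :=
  (∀ S ⊆ Q, Collinear ℝ (S : Set ℂ) → S.card ≤ 2) ∧ ¬ HasParallelogram Q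

/-- The set `Q(P, A, u, v) = ⋃_{p ∈ P} (u·p + (v·p − p + 1)·A)`. -/
def Qset (P A : Finset ℂ) (u v : ℂ) : Finset ℂ :=
  letI := Classical.decEq ℂ
  P.biUnion fun p => A.image fun a => u * p + (v * p - p + 1) * a

/-- The vertex set of the regular `k`-gon. -/
def Rpoly (k : ℕ) : Finset ℂ :=
  letI := Classical.decEq ℂ
  (Finset.range k).image fun j : ℕ => Complex.exp (2 * Real.pi * Complex.I * (j : ℂ) / (k : ℂ))

/-- `ω = e^{2πi/3}`. -/
def omega3 : ℂ := Complex.exp (2 * Real.pi * Complex.I / 3)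

/-- The vertex set `{1, ω, ω²}` of an equilateral triangle. -/
def triEq : Finset ℂ :=
  letI := Classical.decEq ℂ
  {1, omega3, omega3 ^ 2}

/-!
Iterate `A ↦ Q = {x₁ p + x₂ a p + a : a ∈ A, p ∈ P}` for a generic `x ∈ ℂ²`, starting from
`A = P`. The rows of `Q` are similar copies of `A` and its columns similar copies of `P`, so
`S_P(Q) ≥ |P| S_P(A) + |A|`; after `k` steps a set of size `|P|^(k+1)` contains at least
`(k+1) |P|^k` copies, which is of order `n log n`. Each way in which `Q` could have fewer than
`|A| |P|` points or fail to be parallelogram-free is the vanishing of a real-analytic function of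
`x`, and the parallelogram-freeness of `A` and `P` shows that none of these functions is
identically zero; so a residual set of parameters `x` works. Sizes between consecutive powers of
`|P|` are reached by adding generic points one at a time.
-/

open Complex ComplexConjugate Finset Filter Function

theorem forall_collinear_card_le_two_iff {V : Type*} [AddCommGroup V] [Module ℝ V]
    {Q : Finset V} :
    (∀ S ⊆ Q, Collinear ℝ (S : Set V) → S.card ≤ 2) ↔
      ∀ x ∈ Q, ∀ y ∈ Q, ∀ z ∈ Q, x ≠ y → x ≠ z → y ≠ z → ¬ Collinear ℝ ({x, y, z} : Set V) := by
  classical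
  constructor
  · intro h x hx y hy z hz hxy hxz hyz hcol
    have h3 := h {x, y, z} (by simp [insert_subset_iff, hx, hy, hz]) (by simpa using hcol)
    rw [card_insert_of_notMem (by simp [hxy, hxz]), card_pair hyz] at h3
    omega
  · intro h S hS hcol
    by_contra! hS3
    obtain ⟨x, hx, y, hy, z, hz, hxy, hxz, hyz⟩ := two_lt_card.1 hS3
    exact h x (hS hx) y (hS hy) z (hS hz) hxy hxz hyz
      (hcol.subset (by simp [Set.insert_subset_iff, hx, hy, hz]))

theorem Complex.collinear_iff_im_conj_mul_eq_zero (x y z : ℂ) :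
    Collinear ℝ ({x, y, z} : Set ℂ) ↔ (conj (y - x) * (z - x)).im = 0 := by
  rw [collinear_iff_of_mem (p₀ := x) (by simp)]
  constructor
  · rintro ⟨v, hv⟩
    obtain ⟨r, hr⟩ := hv y (by simp)
    obtain ⟨s, hs⟩ := hv z (by simp)
    have : conj (y - x) * (z - x) = (r * s * normSq v : ℝ) := by
      rw [hr, hs, ofReal_mul, ofReal_mul, ← mul_conj]
      simp only [vadd_eq_add, real_smul, add_sub_cancel_right, map_mul, conj_ofReal]
      ring
    rw [this, ofReal_im]
  · intro h
    by_cases hxy : y = x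
    · refine ⟨z - x, ?_⟩
      rintro p (rfl | rfl | rfl)
      · exact ⟨0, by simp⟩
      · exact ⟨0, by simp [hxy]⟩
      · exact ⟨1, by simp⟩
    have hw : y - x ≠ 0 := sub_ne_zero.2 hxy
    have hw' : conj (y - x) ≠ 0 := (map_ne_zero _).2 hw
    refine ⟨y - x, ?_⟩
    rintro p (rfl | rfl | rfl)
    · exact ⟨0, by simp⟩
    · exact ⟨1, by simp⟩
    · refine ⟨(conj (y - x) * (p - x)).re / normSq (y - x), ?_⟩
      have hre : (((conj (y - x) * (p - x)).re : ℝ) : ℂ) = conj (y - x) * (p - x) :=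
        Complex.ext (by simp) (by simpa using h.symm)
      rw [vadd_eq_add, real_smul, ofReal_div, hre, ← mul_conj]
      field_simp
      ring

theorem Complex.collinear_of_sub_eq_real_mul {x y z : ℂ} (l : ℝ) (h : z - x = l * (y - x)) :
    Collinear ℝ ({x, y, z} : Set ℂ) := by
  rw [collinear_iff_of_mem (p₀ := x) (by simp)]
  refine ⟨y - x, ?_⟩
  rintro p (rfl | rfl | rfl)
  · exact ⟨0, by simp⟩
  · exact ⟨1, by simp⟩
  · exact ⟨l, by rw [vadd_eq_add, real_smul, ← h]; ring⟩

theorem ParallelogramFree.eq_and_eq_or_eq_and_eq_of_sub_eq_sub {Q : Finset ℂ}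
    (hQ : ParallelogramFree Q) {p₁ p₂ p₃ p₄ : ℂ} (h₁ : p₁ ∈ Q) (h₂ : p₂ ∈ Q) (h₃ : p₃ ∈ Q)
    (h₄ : p₄ ∈ Q) (h : p₂ - p₁ = p₄ - p₃) : (p₁ = p₂ ∧ p₃ = p₄) ∨ (p₁ = p₃ ∧ p₂ = p₄) := by
  have hcol := forall_collinear_card_le_two_iff.1 hQ.1
  by_cases e₁₂ : p₁ = p₂
  · exact .inl ⟨e₁₂, by linear_combination h + e₁₂⟩
  by_cases e₁₃ : p₁ = p₃
  · exact .inr ⟨e₁₃, by linear_combination h + e₁₃⟩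
  exfalso
  by_cases e₁₄ : p₁ = p₄
  · refine hcol p₃ h₃ p₁ h₁ p₂ h₂ (Ne.symm e₁₃) (fun e => e₁₂ ?_) e₁₂
      (collinear_of_sub_eq_real_mul 2 ?_)
    · linear_combination (-h + e₁₄ + e) / 2
    · push_cast; linear_combination h - e₁₄
  by_cases e₂₃ : p₂ = p₃
  · refine hcol p₁ h₁ p₂ h₂ p₄ h₄ e₁₂ e₁₄ (fun e => e₁₂ ?_)
      (collinear_of_sub_eq_real_mul 2 ?_)
    · linear_combination -h + e - e₂₃
    · push_cast; linear_combination -h - e₂₃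
  by_cases e₂₄ : p₂ = p₄
  · exact e₁₃ (by linear_combination e₂₄ - h)
  by_cases e₃₄ : p₃ = p₄
  · exact e₁₂ (by linear_combination e₃₄ - h)
  exact hQ.2 ⟨p₁, h₁, p₂, h₂, p₃, h₃, p₄, h₄, e₁₂, e₁₃, e₁₄, e₂₃, e₂₄, e₃₄, h⟩

theorem parallelogramFree_image {ι : Type*} {s : Finset ι} {f : ι → ℂ}
    (hcol : ∀ i ∈ s, ∀ j ∈ s, ∀ k ∈ s, i ≠ j → i ≠ k → j ≠ k →
      ¬ Collinear ℝ ({f i, f j, f k} : Set ℂ))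
    (hpar : ∀ i ∈ s, ∀ j ∈ s, ∀ k ∈ s, ∀ l ∈ s, i ≠ j → i ≠ k → i ≠ l → j ≠ k → j ≠ l → k ≠ l →
      f j - f i ≠ f l - f k) :
    ParallelogramFree (s.image f) := by
  refine ⟨forall_collinear_card_le_two_iff.2 ?_, ?_⟩
  · simp only [mem_image, forall_exists_index, and_imp, forall_apply_eq_imp_iff₂]
    intro i hi j hj k hk hij hik hjk
    exact hcol i hi j hj k hk (ne_of_apply_ne f hij) (ne_of_apply_ne f hik) (ne_of_apply_ne f hjk)
  · simp only [HasParallelogram, mem_image, exists_exists_and_eq_and, not_exists, not_and]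
    intro i hi j hj k hk l hl hij hik hil hjk hjl hkl
    exact hpar i hi j hj k hk l hl (ne_of_apply_ne f hij) (ne_of_apply_ne f hik)
      (ne_of_apply_ne f hil) (ne_of_apply_ne f hjk) (ne_of_apply_ne f hjl) (ne_of_apply_ne f hkl)

theorem AnalyticOnNhd.eventually_residual_ne_zero {𝕜 E F : Type*} [NontriviallyNormedField 𝕜]
    [NormedAddCommGroup E] [NormedSpace 𝕜 E] [PreconnectedSpace E]
    [NormedAddCommGroup F] [NormedSpace 𝕜 F] {g : E → F} (hg : AnalyticOnNhd 𝕜 g Set.univ)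
    (h : ∃ x, g x ≠ 0) : ∀ᶠ x in residual E, g x ≠ 0 := by
  refine residual_of_dense_open (isOpen_ne_fun (continuousOn_univ.1 hg.continuousOn)
    continuous_const) fun x₀ => ?_
  rw [mem_closure_iff_frequently]
  by_contra hx₀
  obtain ⟨x, hx⟩ := h
  refine hx (hg.eqOn_zero_of_preconnected_of_eventuallyEq_zero isPreconnected_univ
    (Set.mem_univ x₀) ?_ (Set.mem_univ x))
  simpa [not_frequently, EventuallyEq] using hx₀

theorem eventually_residual_injOn_and_parallelogramFree_image {E ι : Type*}
    [NormedAddCommGroup E] [NormedSpace ℝ E] [PreconnectedSpace E] {s : Finset ι}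
    {g : ι → E → ℂ} (hg : ∀ i, AnalyticOnNhd ℝ (g i) Set.univ)
    (hinj : ∀ i ∈ s, ∀ j ∈ s, i ≠ j → ∃ x, g i x ≠ g j x)
    (hcol : ∀ i ∈ s, ∀ j ∈ s, ∀ k ∈ s, i ≠ j → i ≠ k → j ≠ k →
      ∃ x, ¬ Collinear ℝ ({g i x, g j x, g k x} : Set ℂ))
    (hpar : ∀ i ∈ s, ∀ j ∈ s, ∀ k ∈ s, ∀ l ∈ s, i ≠ j → i ≠ k → i ≠ l → j ≠ k → j ≠ l → k ≠ l →
      ∃ x, g j x - g i x ≠ g l x - g k x) :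
    ∀ᶠ x in residual E, Set.InjOn (g · x) s ∧ ParallelogramFree (s.image (g · x)) := by
  simp only [collinear_iff_im_conj_mul_eq_zero] at hcol
  have hinj' : ∀ᶠ x in residual E, ∀ i ∈ s, ∀ j ∈ s, i ≠ j → g i x - g j x ≠ 0 := by
    simp only [eventually_all_finset, eventually_imp_distrib_left]
    intro i hi j hj hij
    obtain ⟨x, hx⟩ := hinj i hi j hj hij
    exact ((hg i).sub (hg j)).eventually_residual_ne_zero ⟨x, sub_ne_zero.2 hx⟩
  have hcol' : ∀ᶠ x in residual E, ∀ i ∈ s, ∀ j ∈ s, ∀ k ∈ s, i ≠ j → i ≠ k → j ≠ k →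
      (conj (g j x - g i x) * (g k x - g i x)).im ≠ 0 := by
    simp only [eventually_all_finset, eventually_imp_distrib_left]
    intro i hi j hj k hk hij hik hjk
    exact (imCLM.comp_analyticOnNhd ((conjCLE.toContinuousLinearMap.comp_analyticOnNhd
      ((hg j).sub (hg i))).mul ((hg k).sub (hg i)))).eventually_residual_ne_zero
      (hcol i hi j hj k hk hij hik hjk)
  have hpar' : ∀ᶠ x in residual E, ∀ i ∈ s, ∀ j ∈ s, ∀ k ∈ s, ∀ l ∈ s,
      i ≠ j → i ≠ k → i ≠ l → j ≠ k → j ≠ l → k ≠ l → g j x - g i x - (g l x - g k x) ≠ 0 := by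
    simp only [eventually_all_finset, eventually_imp_distrib_left]
    intro i hi j hj k hk l hl hij hik hil hjk hjl hkl
    obtain ⟨x, hx⟩ := hpar i hi j hj k hk l hl hij hik hil hjk hjl hkl
    exact (((hg j).sub (hg i)).sub ((hg l).sub (hg k))).eventually_residual_ne_zero
      ⟨x, sub_ne_zero.2 hx⟩
  filter_upwards [hinj', hcol', hpar'] with x hx₁ hx₂ hx₃
  refine ⟨fun i hi j hj hij => by_contra fun h => hx₁ i hi j hj h (sub_eq_zero.2 hij),
    parallelogramFree_image ?_ ?_⟩
  · simpa only [collinear_iff_im_conj_mul_eq_zero] using hx₂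
  · exact fun i hi j hj k hk l hl hij hik hil hjk hjl hkl h =>
      hx₃ i hi j hj k hk l hl hij hik hil hjk hjl hkl (sub_eq_zero.2 h)

theorem Complex.not_collinear_add_I_mul_sub {a b : ℂ} (h : a ≠ b) :
    ¬ Collinear ℝ ({a, b, a + I * (b - a)} : Set ℂ) := by
  rw [collinear_iff_im_conj_mul_eq_zero, add_sub_cancel_left, mul_left_comm, conj_mul']
  simpa [← ofReal_pow, sub_eq_zero] using h.symm

theorem ParallelogramFree.exists_insert {A : Finset ℂ} (hA : ParallelogramFree A) :
    ∃ x ∉ A, ParallelogramFree (insert x A) := by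
  -- `insert x A` is the image of `A.insertNone` under `o ↦ o.elim x id`, with `x` the parameter.
  let g : Option ℂ → ℂ → ℂ := fun o x => o.elim x id
  have hg : ∀ o, AnalyticOnNhd ℝ (g o) Set.univ := by
    rintro (_ | a)
    · exact analyticOnNhd_id
    · exact analyticOnNhd_const
  have hinj : ∀ i ∈ A.insertNone, ∀ j ∈ A.insertNone, i ≠ j → ∃ x, g i x ≠ g j x := by
    rintro (_ | a) - (_ | b) - hij
    · exact absurd rfl hij
    · exact ⟨b + 1, by simp [g]⟩
    · exact ⟨a + 1, by simp [g]⟩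
    · exact ⟨0, by simpa [g] using hij⟩
  have hcol : ∀ i ∈ A.insertNone, ∀ j ∈ A.insertNone, ∀ k ∈ A.insertNone, i ≠ j → i ≠ k →
      j ≠ k → ∃ x, ¬ Collinear ℝ ({g i x, g j x, g k x} : Set ℂ) := by
    rintro (_ | a) ha (_ | b) hb (_ | c) hc hij hik hjk <;>
      simp only [ne_eq, reduceCtorEq, not_true_eq_false, not_false_eq_true,
        Option.some.injEq, some_mem_insertNone] at hij hik hjk ha hb hc ⊢
    · refine ⟨b + I * (c - b), ?_⟩
      rw [Set.insert_comm, Set.pair_comm]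
      exact not_collinear_add_I_mul_sub hjk
    · refine ⟨a + I * (c - a), ?_⟩
      rw [Set.pair_comm]
      exact not_collinear_add_I_mul_sub hik
    · exact ⟨a + I * (b - a), not_collinear_add_I_mul_sub hij⟩
    · exact ⟨0, forall_collinear_card_le_two_iff.1 hA.1 a ha b hb c hc hij hik hjk⟩
  have hpar : ∀ i ∈ A.insertNone, ∀ j ∈ A.insertNone, ∀ k ∈ A.insertNone, ∀ l ∈ A.insertNone,
      i ≠ j → i ≠ k → i ≠ l → j ≠ k → j ≠ l → k ≠ l → ∃ x, g j x - g i x ≠ g l x - g k x := by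
    intro i hi j hj k hk l hl hij hik hil hjk hjl hkl
    by_contra! h
    have h₀ := h 0
    have h₁ := h 1
    rcases i with _ | a <;> rcases j with _ | b <;> rcases k with _ | c <;> rcases l with _ | d <;>
      simp only [ne_eq, reduceCtorEq, not_true_eq_false, not_false_eq_true,
        Option.some.injEq, some_mem_insertNone, g, Option.elim, id] at * <;>
      first
      | exact one_ne_zero (by linear_combination h₀ - h₁)
      | exact one_ne_zero (by linear_combination h₁ - h₀)
      | exact hA.2 ⟨a, hi, b, hj, c, hk, d, hl, hij, hik, hil, hjk, hjl, hkl, h₀⟩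
  obtain ⟨x, hxinj, hxfree⟩ := (dense_of_mem_residual
    (eventually_residual_injOn_and_parallelogramFree_image hg hinj hcol hpar)).nonempty
  refine ⟨x, fun hx => ?_, ?_⟩
  · exact Option.some_ne_none x (hxinj none_mem_insertNone (some_mem_insertNone.2 hx) rfl).symm
  · convert hxfree using 1
    ext y
    simp [g, Option.exists, eq_comm]

theorem ParallelogramFree.exists_superset_card_eq {A : Finset ℂ} (hA : ParallelogramFree A)
    {n : ℕ} (hn : A.card ≤ n) : ∃ B, A ⊆ B ∧ ParallelogramFree B ∧ B.card = n := by
  induction n, hn using Nat.le_induction with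
  | base => exact ⟨A, subset_rfl, hA, rfl⟩
  | succ n _ ih =>
    obtain ⟨B, hAB, hB, rfl⟩ := ih
    obtain ⟨x, hx, hxB⟩ := hB.exists_insert
    exact ⟨insert x B, hAB.trans (subset_insert x B), hxB, card_insert_of_notMem hx⟩

theorem Complex.eq_zero_and_eq_zero_or_exists_real_of_forall_im_conj_mul_eq_zero
    {α γ α' γ' : ℂ} (h : ∀ σ : ℂ, (conj (α * σ + γ) * (α' * σ + γ')).im = 0) :
    (α = 0 ∧ γ = 0) ∨ ∃ l : ℝ, α' = l * α ∧ γ' = l * γ := by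
  have h' : ∀ σ : ℂ, conj (conj (α * σ + γ) * (α' * σ + γ')) = conj (α * σ + γ) * (α' * σ + γ') :=
    fun σ => conj_eq_iff_im.2 (h σ)
  have e₀ := h' 0
  have e₁ := h' 1
  have em₁ := h' (-1)
  have eI := h' I
  simp only [map_mul, map_add, map_neg, conj_conj, conj_I, mul_zero, mul_one, mul_neg,
    zero_add, neg_neg] at e₀ e₁ em₁ eI
  have fα : α * conj α' = conj α * α' := by linear_combination (e₁ + em₁) / 2 - e₀
  have fI : I * (α * conj γ' - γ * conj α' + conj α * γ' - conj γ * α') = 0 := by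
    linear_combination eI + (I * I) * fα - e₀
  have fY := (mul_eq_zero.1 fI).resolve_left I_ne_zero
  have fγα : α * conj γ' = conj γ * α' := by linear_combination (e₁ - em₁) / 4 + fY / 2
  have fαγ : γ * conj α' = conj α * γ' := by linear_combination (e₁ - em₁) / 4 - fY / 2
  -- `e₀`, `fα`: `conj γ * γ'` and `conj α * α'` are real; `fγα`, `fαγ` tie `γ'` to `α'`.
  by_cases hα : α = 0
  · by_cases hγ : γ = 0
    · exact .inl ⟨hα, hγ⟩
    have hα' : α' = 0 := by
      have : conj γ * α' = 0 := by rw [← fγα, hα, zero_mul]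
      exact (mul_eq_zero.1 this).resolve_left ((map_ne_zero _).2 hγ)
    refine .inr ⟨(conj γ * γ').re / normSq γ, by rw [hα, hα', mul_zero], ?_⟩
    have hre : (((conj γ * γ').re : ℝ) : ℂ) = conj γ * γ' := by
      rw [← conj_eq_iff_re, map_mul, conj_conj]
      exact e₀
    have hns : (normSq γ : ℂ) ≠ 0 := by simpa [normSq_eq_zero] using hγ
    rw [ofReal_div, div_mul_eq_mul_div, eq_div_iff hns, ← mul_conj]
    linear_combination -γ * hre
  · set l : ℝ := (conj α * α').re / normSq α
    have hre : (((conj α * α').re : ℝ) : ℂ) = conj α * α' := by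
      rw [← conj_eq_iff_re, map_mul, conj_conj]
      exact fα
    have hns : (normSq α : ℂ) ≠ 0 := by simpa [normSq_eq_zero] using hα
    have hα' : α' = l * α := by
      rw [ofReal_div, div_mul_eq_mul_div, eq_div_iff hns, ← mul_conj]
      linear_combination -α * hre
    refine .inr ⟨l, hα', mul_left_cancel₀ ((map_ne_zero conj).2 hα) ?_⟩
    rw [← fαγ, hα', map_mul, conj_ofReal]
    ring

/-- Row `p` of `image₂ (gridPoint x) A P` is the similar copy `(x.2 * p + 1) • A + x.1 * p` of `A`
and column `a` is the similar copy `(x.1 + x.2 * a) • P + a` of `P`; the set is the paper's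
`Q(P, A, u, v)` with `u = x.1`, `v = x.2 + 1`. -/
def gridPoint (x : ℂ × ℂ) (a p : ℂ) : ℂ := x.1 * p + x.2 * (a * p) + a

theorem exists_gridPoint_ne {q q' : ℂ × ℂ} (h : q ≠ q') :
    ∃ x, gridPoint x q.1 q.2 ≠ gridPoint x q'.1 q'.2 := by
  by_contra! h'
  have h₀ := h' 0
  have h₁ := h' (1, 0)
  simp only [gridPoint, Prod.fst_zero, Prod.snd_zero, zero_mul, zero_add, one_mul] at h₀ h₁
  exact h (Prod.ext h₀ (by linear_combination h₁ - h₀))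

theorem exists_not_collinear_gridPoint {A P : Finset ℂ}
    (hA : ∀ S ⊆ A, Collinear ℝ (S : Set ℂ) → S.card ≤ 2)
    (hP : ∀ S ⊆ P, Collinear ℝ (S : Set ℂ) → S.card ≤ 2) {q₁ q₂ q₃ : ℂ × ℂ}
    (h₁ : q₁ ∈ A ×ˢ P) (h₂ : q₂ ∈ A ×ˢ P) (h₃ : q₃ ∈ A ×ˢ P)
    (h₁₂ : q₁ ≠ q₂) (h₁₃ : q₁ ≠ q₃) (h₂₃ : q₂ ≠ q₃) :
    ∃ x, ¬ Collinear ℝ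
      ({gridPoint x q₁.1 q₁.2, gridPoint x q₂.1 q₂.2, gridPoint x q₃.1 q₃.2} : Set ℂ) := by
  obtain ⟨a₁, p₁⟩ := q₁
  obtain ⟨a₂, p₂⟩ := q₂
  obtain ⟨a₃, p₃⟩ := q₃
  simp only [mem_product] at h₁ h₂ h₃
  simp only [ne_eq, Prod.mk.injEq] at h₁₂ h₁₃ h₂₃
  by_contra! h
  have hσ : ∀ σ : ℂ, (conj ((p₂ - p₁) * σ + (a₂ - a₁)) * ((p₃ - p₁) * σ + (a₃ - a₁))).im = 0 := by
    intro σ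
    have := (collinear_iff_im_conj_mul_eq_zero _ _ _).1 (h (σ, 0))
    simp only [gridPoint, zero_mul, add_zero] at this
    convert this using 4 <;> ring
  have hA₃ := forall_collinear_card_le_two_iff.1 hA
  have hP₃ := forall_collinear_card_le_two_iff.1 hP
  rcases eq_zero_and_eq_zero_or_exists_real_of_forall_im_conj_mul_eq_zero hσ with
    ⟨hp, ha⟩ | ⟨l, hp, ha⟩
  · exact h₁₂ ⟨by linear_combination -ha, by linear_combination -hp⟩
  by_cases hp₁₂ : p₁ = p₂
  · have hp₁₃ : p₁ = p₃ := by linear_combination -hp + l * hp₁₂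
    exact hA₃ a₁ h₁.1 a₂ h₂.1 a₃ h₃.1 (fun e => h₁₂ ⟨e, hp₁₂⟩) (fun e => h₁₃ ⟨e, hp₁₃⟩)
      (fun e => h₂₃ ⟨e, hp₁₂.symm.trans hp₁₃⟩) (collinear_of_sub_eq_real_mul l ha)
  have hp₂₁ : p₂ - p₁ ≠ 0 := sub_ne_zero.2 (Ne.symm hp₁₂)
  by_cases hp₁₃ : p₁ = p₃
  · have hl : (l : ℂ) = 0 :=
      (mul_eq_zero.1 (by linear_combination -hp - hp₁₃)).resolve_right hp₂₁
    exact h₁₃ ⟨by linear_combination -ha - (a₂ - a₁) * hl, hp₁₃⟩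
  by_cases hp₂₃ : p₂ = p₃
  · have hl : (l : ℂ) - 1 = 0 :=
      (mul_eq_zero.1 (by linear_combination -hp - hp₂₃)).resolve_right hp₂₁
    exact h₂₃ ⟨by linear_combination -ha - (a₂ - a₁) * hl, hp₂₃⟩
  exact hP₃ p₁ h₁.2 p₂ h₂.2 p₃ h₃.2 hp₁₂ hp₁₃ hp₂₃ (collinear_of_sub_eq_real_mul l hp)

theorem exists_gridPoint_sub_ne {A P : Finset ℂ} (hA : ParallelogramFree A)
    (hP : ParallelogramFree P) {q₁ q₂ q₃ q₄ : ℂ × ℂ}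
    (h₁ : q₁ ∈ A ×ˢ P) (h₂ : q₂ ∈ A ×ˢ P) (h₃ : q₃ ∈ A ×ˢ P) (h₄ : q₄ ∈ A ×ˢ P)
    (h₁₂ : q₁ ≠ q₂) (h₁₃ : q₁ ≠ q₃) :
    ∃ x, gridPoint x q₂.1 q₂.2 - gridPoint x q₁.1 q₁.2 ≠
      gridPoint x q₄.1 q₄.2 - gridPoint x q₃.1 q₃.2 := by
  obtain ⟨a₁, p₁⟩ := q₁
  obtain ⟨a₂, p₂⟩ := q₂
  obtain ⟨a₃, p₃⟩ := q₃
  obtain ⟨a₄, p₄⟩ := q₄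
  simp only [mem_product] at h₁ h₂ h₃ h₄
  simp only [ne_eq, Prod.mk.injEq] at h₁₂ h₁₃
  by_contra! h
  have hγ := h (0, 0)
  have hα := h (1, 0)
  have hβ := h (0, 1)
  simp only [gridPoint, zero_mul, one_mul, zero_add] at hγ hα hβ
  have hp : p₂ - p₁ = p₄ - p₃ := by linear_combination hα - hγ
  have hap : a₂ * p₂ - a₁ * p₁ = a₄ * p₄ - a₃ * p₃ := by linear_combination hβ - hγ
  have hp' : p₁ = p₂ ∧ p₁ = p₃ := by
    rcases hP.eq_and_eq_or_eq_and_eq_of_sub_eq_sub h₁.2 h₂.2 h₃.2 h₄.2 hp with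
      ⟨e₁₂, e₃₄⟩ | ⟨e₁₃, e₂₄⟩
    · refine ⟨e₁₂, ?_⟩
      have : (p₁ - p₃) * (a₂ - a₁) = 0 := by
        linear_combination hap + a₂ * e₁₂ - a₄ * e₃₄ - p₃ * hγ
      exact sub_eq_zero.1 ((mul_eq_zero.1 this).resolve_right
        (sub_ne_zero.2 fun e => h₁₂ ⟨e.symm, e₁₂⟩))
    · refine ⟨?_, e₁₃⟩
      have : (p₂ - p₁) * (a₁ - a₃) = 0 := by
        linear_combination hap - p₂ * hγ - a₄ * e₂₄ + a₃ * e₁₃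
      exact (sub_eq_zero.1 ((mul_eq_zero.1 this).resolve_right
        (sub_ne_zero.2 fun e => h₁₃ ⟨e, e₁₃⟩))).symm
  rcases hA.eq_and_eq_or_eq_and_eq_of_sub_eq_sub h₁.1 h₂.1 h₃.1 h₄.1 hγ with ⟨e, -⟩ | ⟨e, -⟩
  · exact h₁₂ ⟨e, hp'.1⟩
  · exact h₁₃ ⟨e, hp'.2⟩

def IsSimilarity (g : ℂ → ℂ) : Prop := ∃ z w, z ≠ 0 ∧ ∀ p, g p = z * p + w

theorem IsSimilarity.injective {g : ℂ → ℂ} (hg : IsSimilarity g) : Injective g := by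
  obtain ⟨z, w, hz, hzw⟩ := hg
  intro a b hab
  simpa [hzw, hz] using hab

theorem SimilarFin.refl (P : Finset ℂ) : SimilarFin P P :=
  ⟨1, 0, one_ne_zero, by simp⟩

theorem SimilarFin.card_eq {P V : Finset ℂ} (h : SimilarFin P V) : V.card = P.card := by
  obtain ⟨z, w, hz, hV⟩ := h
  have hinj : Injective (fun p : ℂ => z * p + w) := fun a b hab => by simpa [hz] using hab
  simpa [Set.ncard_coe_finset, Set.ncard_image_of_injective _ hinj] using congrArg Set.ncard hV

theorem SimilarFin.image {P V : Finset ℂ} (h : SimilarFin P V) {g : ℂ → ℂ}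
    (hg : IsSimilarity g) : SimilarFin P (V.image g) := by
  obtain ⟨z', w', hz', hV⟩ := h
  obtain ⟨z, w, hz, hzw⟩ := hg
  refine ⟨z * z', z * w' + w, mul_ne_zero hz hz', ?_⟩
  rw [coe_image, hV, Set.image_image]
  congr 1
  ext p
  rw [hzw]
  ring

theorem SP_eq_card_filter (P Q : Finset ℂ) [DecidablePred (SimilarFin P)] :
    SP P Q = {V ∈ Q.powerset | SimilarFin P V}.card := by
  unfold SP
  congr

theorem SP_mono (P : Finset ℂ) {A B : Finset ℂ} (h : A ⊆ B) : SP P A ≤ SP P B := by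
  classical
  rw [SP_eq_card_filter, SP_eq_card_filter]
  exact card_le_card (filter_subset_filter _ (powerset_mono.2 h))

theorem le_SP_of_injOn {ι : Type*} {s : Finset ι} {P Q : Finset ℂ} (F : ι → Finset ℂ)
    (hF : ∀ i ∈ s, F i ⊆ Q ∧ SimilarFin P (F i)) (hinj : Set.InjOn F s) : s.card ≤ SP P Q := by
  classical
  rw [SP_eq_card_filter]
  exact card_le_card_of_injOn F (fun i hi => by simpa using hF i hi) hinj

theorem eq_and_eq_of_injOn_uncurry {A P : Finset ℂ} {f : ℂ → ℂ → ℂ}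
    (hf : Set.InjOn (fun q : ℂ × ℂ => f q.1 q.2) (A ×ˢ P : Finset (ℂ × ℂ))) {a a' p p' : ℂ}
    (ha : a ∈ A) (hp : p ∈ P) (ha' : a' ∈ A) (hp' : p' ∈ P) (h : f a p = f a' p') :
    a = a' ∧ p = p' :=
  Prod.ext_iff.1 (@hf (a, p) (by simp [ha, hp]) (a', p') (by simp [ha', hp']) h)

/-- A column meets row `p` in one point only, so it is not the image of anything in that row. -/
theorem image_ne_image_of_injOn_uncurry {A P V : Finset ℂ} (hP : 2 ≤ P.card) {f : ℂ → ℂ → ℂ}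
    (hf : Set.InjOn (fun q : ℂ × ℂ => f q.1 q.2) (A ×ˢ P : Finset (ℂ × ℂ))) {a p : ℂ}
    (ha : a ∈ A) (hp : p ∈ P) (hV : V ⊆ A) : P.image (f a) ≠ V.image (f · p) := by
  intro h
  have hP₁ : ∀ p' ∈ P, p' = p := fun p' hp' => by
    obtain ⟨v, hv, hvp⟩ := mem_image.1 (h ▸ mem_image_of_mem (f a) hp')
    exact (eq_and_eq_of_injOn_uncurry hf (hV hv) hp ha hp' hvp).2.symm
  have := card_le_one.2 fun p₁ hp₁ p₂ hp₂ => (hP₁ p₁ hp₁).trans (hP₁ p₂ hp₂).symm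
  omega

theorem card_mul_SP_add_card_le_SP_image₂ {P A : Finset ℂ} (hP : 2 ≤ P.card) {f : ℂ → ℂ → ℂ}
    (hf : Set.InjOn (fun q : ℂ × ℂ => f q.1 q.2) (A ×ˢ P : Finset (ℂ × ℂ)))
    (hrow : ∀ p ∈ P, IsSimilarity (f · p)) (hcol : ∀ a ∈ A, IsSimilarity (f a)) :
    P.card * SP P A + A.card ≤ SP P (image₂ f A P) := by
  classical
  let F : (ℂ × Finset ℂ) ⊕ ℂ → Finset ℂ :=
    Sum.elim (fun pV => pV.2.image (f · pV.1)) (fun a => P.image (f a))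
  calc P.card * SP P A + A.card
      = ((P ×ˢ {V ∈ A.powerset | SimilarFin P V}).disjSum A).card := by
        rw [card_disjSum, card_product, SP_eq_card_filter]
    _ ≤ SP P (image₂ f A P) := by
      refine le_SP_of_injOn F ?_ ?_
      · rintro (⟨p, V⟩ | a) hi
        · simp only [inl_mem_disjSum, mem_product, mem_filter, mem_powerset] at hi
          obtain ⟨hp, hVA, hV⟩ := hi
          refine ⟨fun y hy => ?_, hV.image (hrow p hp)⟩
          obtain ⟨a, ha, rfl⟩ := mem_image.1 hy
          exact mem_image₂_of_mem (hVA ha) hp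
        · rw [inr_mem_disjSum] at hi
          refine ⟨fun y hy => ?_, (SimilarFin.refl P).image (hcol a hi)⟩
          obtain ⟨p, hp, rfl⟩ := mem_image.1 hy
          exact mem_image₂_of_mem hi hp
      · rintro (⟨p, V⟩ | a) hi (⟨p', V'⟩ | a') hi' h <;>
          simp only [mem_coe, inl_mem_disjSum, inr_mem_disjSum, mem_product, mem_filter,
            mem_powerset] at hi hi'
        · obtain ⟨hp, hVA, hV⟩ := hi
          simp only [F, Sum.elim_inl] at h
          obtain ⟨v, hv⟩ : V.Nonempty := card_pos.1 (by rw [hV.card_eq]; omega)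
          obtain ⟨v', hv', hvv'⟩ := mem_image.1 (h ▸ mem_image_of_mem (f · p) hv)
          obtain rfl := (eq_and_eq_of_injOn_uncurry hf (hi'.2.1 hv') hi'.1 (hVA hv) hp hvv').2.symm
          rw [image_injective (hrow p hp).injective h]
        · exact absurd h.symm (image_ne_image_of_injOn_uncurry hP hf hi' hi.1 hi.2.1)
        · exact absurd h (image_ne_image_of_injOn_uncurry hP hf hi hi'.1 hi'.2.1)
        · obtain ⟨p₀, hp₀⟩ : P.Nonempty := card_pos.1 (by omega)
          simp only [F, Sum.elim_inr] at h
          obtain ⟨p₁, hp₁, hp⟩ := mem_image.1 (h ▸ mem_image_of_mem (f a) hp₀)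
          rw [(eq_and_eq_of_injOn_uncurry hf hi' hp₁ hi hp₀ hp).1]

theorem analyticOnNhd_gridPoint (a p : ℂ) :
    AnalyticOnNhd ℝ (fun x => gridPoint x a p) Set.univ :=
  ((analyticOnNhd_fst.mul analyticOnNhd_const).add
    (analyticOnNhd_snd.mul analyticOnNhd_const)).add analyticOnNhd_const

theorem ParallelogramFree.exists_card_eq_mul_card_and_le_SP {P A : Finset ℂ}
    (hAf : ParallelogramFree A) (hP : 2 ≤ P.card) (hPf : ParallelogramFree P) :
    ∃ B, ParallelogramFree B ∧ B.card = A.card * P.card ∧ P.card * SP P A + A.card ≤ SP P B := by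
  have hgrid := eventually_residual_injOn_and_parallelogramFree_image (s := A ×ˢ P)
    (fun q => analyticOnNhd_gridPoint q.1 q.2) (fun _ _ _ _ h => exists_gridPoint_ne h)
    (fun _ h₁ _ h₂ _ h₃ h₁₂ h₁₃ h₂₃ =>
      exists_not_collinear_gridPoint hAf.1 hPf.1 h₁ h₂ h₃ h₁₂ h₁₃ h₂₃)
    (fun _ h₁ _ h₂ _ h₃ _ h₄ h₁₂ h₁₃ _ _ _ _ =>
      exists_gridPoint_sub_ne hAf hPf h₁ h₂ h₃ h₄ h₁₂ h₁₃)
  have hrow : ∀ᶠ x in residual (ℂ × ℂ), ∀ p ∈ P, x.2 * p + 1 ≠ 0 :=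
    eventually_all_finset _ |>.2 fun p _ => AnalyticOnNhd.eventually_residual_ne_zero (𝕜 := ℝ)
      ((analyticOnNhd_snd.mul analyticOnNhd_const).add analyticOnNhd_const) ⟨0, by simp⟩
  have hcol : ∀ᶠ x in residual (ℂ × ℂ), ∀ a ∈ A, x.1 + x.2 * a ≠ 0 :=
    eventually_all_finset _ |>.2 fun a _ => AnalyticOnNhd.eventually_residual_ne_zero (𝕜 := ℝ)
      (analyticOnNhd_fst.add (analyticOnNhd_snd.mul analyticOnNhd_const)) ⟨(1, 0), by simp⟩
  obtain ⟨x, ⟨hinj, hfree⟩, hrow, hcol⟩ :=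
    (dense_of_mem_residual (hgrid.and (hrow.and hcol))).nonempty
  refine ⟨image₂ (gridPoint x) A P, image_uncurry_product (gridPoint x) A P ▸ hfree,
    card_image₂_iff.2 (by simpa using hinj), card_mul_SP_add_card_le_SP_image₂ hP hinj
      (fun p hp => ⟨x.2 * p + 1, x.1 * p, hrow p hp, fun a => by simp only [gridPoint]; ring⟩)
      (fun a ha => ⟨x.1 + x.2 * a, a, hcol a ha, fun p => by simp only [gridPoint]; ring⟩)⟩

theorem exists_parallelogramFree_card_eq_pow {P : Finset ℂ} (hP : 2 ≤ P.card)
    (hPf : ParallelogramFree P) (k : ℕ) :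
    ∃ A, ParallelogramFree A ∧ A.card = P.card ^ (k + 1) ∧ (k + 1) * P.card ^ k ≤ SP P A := by
  induction k with
  | zero =>
    refine ⟨P, hPf, by simp, ?_⟩
    simpa using le_SP_of_injOn (s := {P}) id (by simp [SimilarFin.refl]) (Set.injOn_id _)
  | succ k ih =>
    obtain ⟨A, hA, hcard, hSP⟩ := ih
    obtain ⟨B, hB, hBcard, hBSP⟩ := hA.exists_card_eq_mul_card_and_le_SP hP hPf
    refine ⟨B, hB, by rw [hBcard, hcard, ← pow_succ], ?_⟩
    calc (k + 1 + 1) * P.card ^ (k + 1) = P.card * ((k + 1) * P.card ^ k) + P.card ^ (k + 1) := by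
          ring
      _ ≤ P.card * SP P A + A.card := by rw [hcard]; gcongr
      _ ≤ SP P B := hBSP

theorem mul_log_le_of_le_pow {m n k : ℕ} (hm : 1 < m) (hn : n ≤ m ^ (k + 2)) :
    (n : ℝ) * Real.log n ≤ 2 * m ^ 2 * Real.log m * ((k + 1) * m ^ k) := by
  have hlogm : 0 ≤ Real.log m := Real.log_nonneg (by exact_mod_cast hm.le)
  rcases Nat.eq_zero_or_pos n with rfl | hn₀
  · simp only [CharP.cast_eq_zero, zero_mul]
    positivity
  have hn' : (n : ℝ) ≤ (m : ℝ) ^ (k + 2) := by exact_mod_cast hn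
  calc (n : ℝ) * Real.log n ≤ (m : ℝ) ^ (k + 2) * Real.log ((m : ℝ) ^ (k + 2)) :=
        mul_le_mul hn' (Real.log_le_log (by positivity) hn')
          (Real.log_nonneg (by exact_mod_cast hn₀)) (by positivity)
    _ = (k + 2) * m ^ (k + 2) * Real.log m := by rw [Real.log_pow]; push_cast; ring
    _ ≤ 2 * (k + 1) * m ^ (k + 2) * Real.log m := by gcongr; linarith
    _ = 2 * m ^ 2 * Real.log m * ((k + 1) * m ^ k) := by ring

/-- Lower bound for parallelogram-free sets: if `P` is a parallelogram-free pattern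
with `|P| ≥ 3`, then there is `c > 0` such that for every `n ≥ |P|` there is a
parallelogram-free `n`-set `A` with `S_P(A) ≥ c·n·log n`. -/
theorem stmt19 (P : Finset ℂ) (hP : 3 ≤ P.card) (hPfree : ParallelogramFree P) :
    ∃ c : ℝ, 0 < c ∧ ∀ n : ℕ, P.card ≤ n →
      ∃ A : Finset ℂ, ParallelogramFree A ∧ A.card = n ∧
        c * (n : ℝ) * Real.log (n : ℝ) ≤ (SP P A : ℝ) := by
  set m := P.card
  have hm : 1 < m := by omega
  have hlogm : 0 < Real.log m := Real.log_pos (by exact_mod_cast hm)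
  refine ⟨(2 * m ^ 2 * Real.log m)⁻¹, by positivity, fun n hn => ?_⟩
  obtain ⟨k, hk⟩ := Nat.exists_eq_add_one_of_ne_zero (Nat.log_pos hm hn).ne'
  obtain ⟨A₀, hA₀, hcard₀, hSP₀⟩ := exists_parallelogramFree_card_eq_pow (by omega) hPfree k
  obtain ⟨A, hA₀A, hA, hcard⟩ :=
    hA₀.exists_superset_card_eq (hcard₀ ▸ hk ▸ Nat.pow_log_le_self m (by omega : n ≠ 0))
  refine ⟨A, hA, hcard, ?_⟩
  have hnm : n ≤ m ^ (k + 2) := (hk ▸ Nat.lt_pow_succ_log_self hm n).le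
  calc (2 * m ^ 2 * Real.log m)⁻¹ * n * Real.log n
      ≤ (2 * m ^ 2 * Real.log m)⁻¹ * (2 * m ^ 2 * Real.log m * ((k + 1) * m ^ k)) := by
        rw [mul_assoc]
        exact mul_le_mul_of_nonneg_left (mul_log_le_of_le_pow hm hnm) (by positivity)
    _ = (k + 1) * m ^ k := by field_simp
    _ ≤ SP P A := by exact_mod_cast hSP₀.trans (SP_mono P hA₀A)
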